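/- arXiv:2311.16870 — 5 statements merged into one kernel-verified Lean document; each statement's English description precedes it below -/
import Mathlib

section
/- Let p be a prime, n ≥ 1, M = s·p^m and N = s·p^n with gcd(s,p) = 1 and m ≥ n. If a ∈ K_N is totally positive and y = Σ_{i=0}^{p^{m-n}-1} x_i ζ_M^i with x_i ∈ O_{K_N}, then Tr_{K_M/ℚ}(a·y·ȳ) = p^{m-n} · Σ_{i=0}^{p^{m-n}-1} Tr_{K_N/ℚ}(a·x_i·x̄_i). -/
/-! Put `d = p^{m-n}`; since `n ≥ 1`, `φ(M) = d·φ(N)`, so `[K_M : K_N] = d`. Over `K_N` the root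
`ζ = ζ_M` generates `K_M` and `ζ^d ∈ K_N`, so every `σ ∈ Gal(K_M/K_N)` sends `ζ` to some `ζ ξ^j`
with `ξ` a primitive `d`-th root of unity, and by counting each `j < d` occurs exactly once.
Hence `Tr_{K_M/K_N}(ζ^t) = ζ^t ∑_j ξ^{jt} = 0` unless `d ∣ t`: the powers `1, ζ, …, ζ^{d-1}` are
orthogonal for `(u, v) ↦ Tr_{K_M/K_N}(u v̄)`, with `Tr(1) = d`. Expanding `a y ȳ` and composing
with `Tr_{K_N/ℚ}` gives the formula. -/

noncomputable section

/-- Total positivity: all complex embeddings take positive real values. -/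
def totPos (K : Type*) [Field K] [NumberField K] (a : K) : Prop :=
  ∀ φ : K →+* ℂ, 0 < (φ a).re ∧ (φ a).im = 0

/-- The real value `Tr_{K/ℚ}(a·x·x̄) = ∑_φ φ(a)·|φ(x)|²` of the unary trace form at `x`. -/
def qform (K : Type*) [Field K] [NumberField K] (a x : K) : ℝ :=
  ∑ φ : K →+* ℂ, (φ a).re * Complex.normSq (φ x)

/-- `μ(a)`: the infimum of the trace form over nonzero algebraic integers. -/
def muK (K : Type*) [Field K] [NumberField K] (a : K) : ℝ :=
  sInf { t | ∃ x : NumberField.RingOfIntegers K, x ≠ 0 ∧ t = qform K a (x : K) }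

/-- `μ*(a)`: the infimum of the trace form over units. -/
def muStarK (K : Type*) [Field K] [NumberField K] (a : K) : ℝ :=
  sInf { t | ∃ u : (NumberField.RingOfIntegers K)ˣ,
    t = qform K a ((u : NumberField.RingOfIntegers K) : K) }

/-- A number field is unit reducible if `μ(a) = μ*(a)` for all totally positive `a`. -/
def UnitReducible (K : Type*) [Field K] [NumberField K] : Prop :=
  ∀ a : K, totPos K a → muK K a = muStarK K a

/-- The reduction discrepancy `δ_K = sup_a μ*(a)/μ(a)`. -/
def deltaK (K : Type*) [Field K] [NumberField K] : ℝ :=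
  sSup { t | ∃ a : K, totPos K a ∧ t = muStarK K a / muK K a }

open Module Polynomial

section KummerTrace

variable {L K : Type*} [Field L] [Field K] [Algebra L K] {d : ℕ} {ζ ξ : K}

theorem exists_algEquiv_apply_eq_mul_pow [NeZero d] (hξ : IsPrimitiveRoot ξ d) (hζ0 : ζ ≠ 0)
    (hpow : ζ ^ d ∈ Set.range (algebraMap L K)) (σ : K ≃ₐ[L] K) :
    ∃ j : Fin d, σ ζ = ζ * ξ ^ (j : ℕ) := by
  obtain ⟨c, hc⟩ := hpow
  have hroot : (σ ζ * ζ⁻¹) ^ d = 1 := by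
    rw [mul_pow, ← map_pow, ← hc, AlgEquiv.commutes, hc, inv_pow,
      mul_inv_cancel₀ (pow_ne_zero _ hζ0)]
  obtain ⟨j, hj, hje⟩ := hξ.eq_pow_of_pow_eq_one hroot
  exact ⟨⟨j, hj⟩, by rw [hje]; field_simp⟩

theorem algEquiv_ext_of_adjoin_eq_top (hgen : Algebra.adjoin L {ζ} = ⊤) {σ τ : K ≃ₐ[L] K}
    (h : σ ζ = τ ζ) : σ = τ :=
  AlgEquiv.coe_toAlgHom_injective <| AlgHom.ext_of_adjoin_eq_top hgen <| by simpa using h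

variable [FiniteDimensional L K] [IsGalois L K]

theorem exists_bijective_algEquiv_apply_eq_mul_pow (hξ : IsPrimitiveRoot ξ d) (hζ0 : ζ ≠ 0)
    (hpow : ζ ^ d ∈ Set.range (algebraMap L K)) (hgen : Algebra.adjoin L {ζ} = ⊤)
    (hd : finrank L K = d) :
    ∃ F : (K ≃ₐ[L] K) → Fin d, F.Bijective ∧ ∀ σ, σ ζ = ζ * ξ ^ (F σ : ℕ) := by
  have : NeZero d := ⟨hd ▸ finrank_pos.ne'⟩
  choose F hF using exists_algEquiv_apply_eq_mul_pow hξ hζ0 hpow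
  refine ⟨F, (Fintype.bijective_iff_injective_and_card F).2 ⟨fun σ τ h => ?_, ?_⟩, hF⟩
  · exact algEquiv_ext_of_adjoin_eq_top hgen (by rw [hF σ, hF τ, h])
  · rw [← Nat.card_eq_fintype_card, IsGalois.card_aut_eq_finrank, hd, Fintype.card_fin]

theorem trace_zpow_eq_zero_of_not_dvd (hξ : IsPrimitiveRoot ξ d) (hζ0 : ζ ≠ 0)
    (hpow : ζ ^ d ∈ Set.range (algebraMap L K)) (hgen : Algebra.adjoin L {ζ} = ⊤)
    (hd : finrank L K = d) {t : ℤ} (ht : ¬ (d : ℤ) ∣ t) :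
    Algebra.trace L K (ζ ^ t) = 0 := by
  obtain ⟨F, hF, hFζ⟩ := exists_bijective_algEquiv_apply_eq_mul_pow hξ hζ0 hpow hgen hd
  have hξt : ξ ^ t ≠ 1 := fun h => ht ((hξ.zpow_eq_one_iff_dvd t).1 h)
  have hgeom : ∑ j : Fin d, (ξ ^ t) ^ (j : ℕ) = 0 := by
    rw [Fin.sum_univ_eq_sum_range (fun j => (ξ ^ t) ^ j), geom_sum_eq hξt, ← zpow_natCast,
      ← zpow_mul, mul_comm, zpow_mul, zpow_natCast, hξ.pow_eq_one, one_zpow, sub_self, zero_div]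
  apply (algebraMap L K).injective
  calc algebraMap L K (Algebra.trace L K (ζ ^ t))
      = ∑ σ : K ≃ₐ[L] K, (ζ * ξ ^ (F σ : ℕ)) ^ t := by
        rw [trace_eq_sum_automorphisms]
        exact Fintype.sum_congr _ _ fun σ => by rw [map_zpow₀, hFζ]
    _ = ∑ j : Fin d, ζ ^ t * (ξ ^ t) ^ (j : ℕ) := by
        rw [Fintype.sum_bijective F hF _ (fun j : Fin d => ζ ^ t * (ξ ^ t) ^ (j : ℕ))]
        intro σ
        rw [mul_zpow, ← zpow_natCast, ← zpow_natCast, ← zpow_mul, ← zpow_mul, mul_comm t]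
    _ = algebraMap L K 0 := by rw [← Finset.mul_sum, hgeom, mul_zero, map_zero]

theorem trace_pow_mul_inv_pow (hξ : IsPrimitiveRoot ξ d) (hζ0 : ζ ≠ 0)
    (hpow : ζ ^ d ∈ Set.range (algebraMap L K)) (hgen : Algebra.adjoin L {ζ} = ⊤)
    (hd : finrank L K = d) (i j : Fin d) :
    Algebra.trace L K (ζ ^ (i : ℕ) * ζ⁻¹ ^ (j : ℕ)) = if i = j then (d : L) else 0 := by
  split_ifs with hij
  · rw [hij, inv_pow, mul_inv_cancel₀ (pow_ne_zero _ hζ0), ← map_one (algebraMap L K),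
      Algebra.trace_algebraMap, hd, nsmul_one]
  · rw [inv_pow, ← zpow_natCast, ← zpow_natCast, ← zpow_neg, ← zpow_add₀ hζ0]
    refine trace_zpow_eq_zero_of_not_dvd hξ hζ0 hpow hgen hd fun hdvd => hij (Fin.ext ?_)
    have hlt : |((i : ℕ) : ℤ) + -((j : ℕ) : ℤ)| < d := by
      rw [abs_lt]; omega
    have := Int.eq_zero_of_abs_lt_dvd hdvd hlt
    omega

theorem trace_sum_mul_sum_inv (hξ : IsPrimitiveRoot ξ d) (hζ0 : ζ ≠ 0)
    (hpow : ζ ^ d ∈ Set.range (algebraMap L K)) (hgen : Algebra.adjoin L {ζ} = ⊤)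
    (hd : finrank L K = d) (x z : Fin d → L) :
    Algebra.trace L K ((∑ i : Fin d, algebraMap L K (x i) * ζ ^ (i : ℕ)) *
        ∑ j : Fin d, algebraMap L K (z j) * ζ⁻¹ ^ (j : ℕ)) =
      d * ∑ i : Fin d, x i * z i := by
  simp_rw [Finset.sum_mul_sum, map_sum, Finset.mul_sum]
  refine Finset.sum_congr rfl fun i _ => ?_
  have hterm : ∀ j : Fin d, Algebra.trace L K (algebraMap L K (x i) * ζ ^ (i : ℕ) *
      (algebraMap L K (z j) * ζ⁻¹ ^ (j : ℕ))) = x i * z j * if i = j then (d : L) else 0 := by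
    intro j
    rw [mul_mul_mul_comm, ← map_mul, ← Algebra.smul_def, map_smul, smul_eq_mul,
      trace_pow_mul_inv_pow hξ hζ0 hpow hgen hd]
  simp_rw [hterm, mul_ite, mul_zero, Finset.sum_ite_eq, Finset.mem_univ, if_true]
  ring

end KummerTrace

theorem Algebra.adjoin_eq_top_of_adjoin_eq_top {F E K : Type*} [CommSemiring F] [CommSemiring E]
    [CommSemiring K] [Algebra F E] [Algebra F K] [Algebra E K] [IsScalarTower F E K] {s : Set K}
    (h : Algebra.adjoin F s = ⊤) : Algebra.adjoin E s = ⊤ :=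
  Subalgebra.restrictScalars_injective F <| by
    rw [Subalgebra.restrictScalars_top, ← top_le_iff, ← h]
    exact Algebra.adjoin_le Algebra.subset_adjoin

theorem algEquiv_apply_algebraMap_of_adjoin_eq_top {F L K : Type*} [CommSemiring F]
    [CommSemiring L] [CommSemiring K] [Algebra F L] [Algebra F K] [Algebra L K]
    [IsScalarTower F L K] {ζN : L} (hgen : Algebra.adjoin F {ζN} = ⊤) (σK : K ≃ₐ[F] K)
    (σL : L ≃ₐ[F] L) (h : σK (algebraMap L K ζN) = algebraMap L K (σL ζN)) (z : L) :
    σK (algebraMap L K z) = algebraMap L K (σL z) := by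
  have : (σK : K →ₐ[F] K).comp (IsScalarTower.toAlgHom F L K) =
      (IsScalarTower.toAlgHom F L K).comp (σL : L →ₐ[F] L) :=
    AlgHom.ext_of_adjoin_eq_top hgen <| by simpa using h
  exact DFunLike.congr_fun this z

theorem Nat.totient_mul_prime_pow_eq {p s m n : ℕ} (hp : p.Prime) (hn : 1 ≤ n) (hmn : n ≤ m) :
    (s * p ^ m).totient = p ^ (m - n) * (s * p ^ n).totient := by
  obtain ⟨k, rfl⟩ := Nat.exists_eq_add_of_le hmn
  rw [Nat.add_sub_cancel_left]
  clear hmn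
  induction k with
  | zero => simp
  | succ k ih =>
    have hdvd : p ∣ s * p ^ (n + k) := dvd_mul_of_dvd_right (dvd_pow_self p (by omega)) s
    rw [← add_assoc, pow_succ, ← mul_assoc, mul_comm _ p, Nat.totient_mul_of_prime_of_dvd hp hdvd,
      ih, pow_succ]
    ring

theorem IsCyclotomicExtension.totient_mul_finrank_eq_totient {K L : Type*} [Field K] [Field L]
    [Algebra ℚ K] [Algebra ℚ L] [Algebra L K] [IsScalarTower ℚ L K] {M N : ℕ} [NeZero M]
    [NeZero N] [IsCyclotomicExtension {M} ℚ K] [IsCyclotomicExtension {N} ℚ L] :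
    N.totient * Module.finrank L K = M.totient := by
  have : FiniteDimensional ℚ K := IsCyclotomicExtension.finiteDimensional {M} ℚ K
  have : FiniteDimensional L K := Module.Finite.right ℚ L K
  rw [← IsCyclotomicExtension.finrank L (cyclotomic.irreducible_rat (NeZero.pos N)),
    ← IsCyclotomicExtension.finrank K (cyclotomic.irreducible_rat (NeZero.pos M)),
    finrank_mul_finrank]

theorem stmt2_general (p s m n : ℕ) (hp : p.Prime) (hmn : n ≤ m) (hn : 1 ≤ n)
    (M N : ℕ+) (hM : (M : ℕ) = s * p ^ m) (hN : (N : ℕ) = s * p ^ n)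
    (K L : Type) [Field K] [Field L] [Algebra ℚ K] [Algebra ℚ L]
    [Algebra L K] [IsScalarTower ℚ L K]
    [IsCyclotomicExtension {(M : ℕ)} ℚ K] [IsCyclotomicExtension {(N : ℕ)} ℚ L]
    [NumberField K] [NumberField L]
    (ζ : K) (hζ : IsPrimitiveRoot ζ M)
    (ζN : L) (hζN : IsPrimitiveRoot ζN N)
    (hcomp : algebraMap L K ζN = ζ ^ (p ^ (m - n)))
    (σK : K ≃ₐ[ℚ] K) (hσK : σK ζ = ζ⁻¹)
    (σL : L ≃ₐ[ℚ] L) (hσL : σL ζN = ζN⁻¹)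
    (a : L)
    (x : Fin (p ^ (m - n)) → L) :
    Algebra.trace ℚ K (algebraMap L K a *
        (∑ i : Fin (p ^ (m - n)), algebraMap L K (x i) * ζ ^ (i : ℕ)) *
        σK (∑ i : Fin (p ^ (m - n)), algebraMap L K (x i) * ζ ^ (i : ℕ))) =
      (p : ℚ) ^ (m - n) *
        ∑ i : Fin (p ^ (m - n)), Algebra.trace ℚ L (a * x i * σL (x i)) := by
  have : FiniteDimensional L K := Module.Finite.right ℚ L K
  have : IsGalois ℚ K := IsCyclotomicExtension.isGalois {(M : ℕ)} ℚ K
  have : IsGalois L K := IsGalois.tower_top_of_isGalois ℚ L K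
  have hrank : finrank L K = p ^ (m - n) := by
    have h := IsCyclotomicExtension.totient_mul_finrank_eq_totient (K := K) (L := L)
      (M := M) (N := N)
    rw [hM, hN, Nat.totient_mul_prime_pow_eq hp hn hmn, mul_comm (p ^ _)] at h
    exact Nat.eq_of_mul_eq_mul_left (Nat.totient_pos.2 (hN ▸ N.pos)) h
  have hξ : IsPrimitiveRoot (ζ ^ (N : ℕ)) (p ^ (m - n)) :=
    hζ.pow M.pos (by rw [hM, hN, mul_assoc, ← pow_add, Nat.add_sub_cancel' hmn])
  have hgen : Algebra.adjoin L {ζ} = ⊤ := Algebra.adjoin_eq_top_of_adjoin_eq_top (F := ℚ)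
    (IsCyclotomicExtension.adjoin_primitive_root_eq_top hζ)
  have hσ : ∀ z, σK (algebraMap L K z) = algebraMap L K (σL z) :=
    algEquiv_apply_algebraMap_of_adjoin_eq_top
      (IsCyclotomicExtension.adjoin_primitive_root_eq_top hζN) σK σL
      (by rw [hcomp, map_pow, hσK, hσL, map_inv₀, hcomp, inv_pow])
  have hconj : σK (∑ i : Fin (p ^ (m - n)), algebraMap L K (x i) * ζ ^ (i : ℕ)) =
      ∑ i : Fin (p ^ (m - n)), algebraMap L K (σL (x i)) * ζ⁻¹ ^ (i : ℕ) := by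
    simp only [map_sum, map_mul, map_pow, hσ, hσK]
  rw [hconj, mul_assoc, ← Algebra.trace_trace (S := L), ← Algebra.smul_def, map_smul,
    trace_sum_mul_sum_inv hξ (hζ.ne_zero M.ne_zero) ⟨ζN, hcomp⟩ hgen hrank, smul_eq_mul,
    mul_left_comm, ← nsmul_eq_mul (p ^ (m - n)), map_nsmul, nsmul_eq_mul, Nat.cast_pow,
    Finset.mul_sum, map_sum]
  simp only [mul_assoc]

/-- The trace form of a lifted totally positive `a` decomposes along the basis
`1, ζ_M, …, ζ_M^{p^{m-n}-1}` of `K_M` over `K_N`. -/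
theorem stmt2 (p s m n : ℕ) (hp : p.Prime) (hs : s.Coprime p) (hmn : n ≤ m) (hn : 1 ≤ n)
    (hs0 : 0 < s)
    (M N : ℕ+) (hM : (M : ℕ) = s * p ^ m) (hN : (N : ℕ) = s * p ^ n)
    (K L : Type) [Field K] [Field L] [Algebra ℚ K] [Algebra ℚ L]
    [Algebra L K] [IsScalarTower ℚ L K]
    [IsCyclotomicExtension {(M : ℕ)} ℚ K] [IsCyclotomicExtension {(N : ℕ)} ℚ L]
    [NumberField K] [NumberField L]
    (ζ : K) (hζ : IsPrimitiveRoot ζ M)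
    (ζN : L) (hζN : IsPrimitiveRoot ζN N)
    (hcomp : algebraMap L K ζN = ζ ^ (p ^ (m - n)))
    (σK : K ≃ₐ[ℚ] K) (hσK : σK ζ = ζ⁻¹)
    (σL : L ≃ₐ[ℚ] L) (hσL : σL ζN = ζN⁻¹)
    (a : L) (ha : totPos L a)
    (x : Fin (p ^ (m - n)) → L) (hx : ∀ i, IsIntegral ℤ (x i)) :
    Algebra.trace ℚ K (algebraMap L K a *
        (∑ i : Fin (p ^ (m - n)), algebraMap L K (x i) * ζ ^ (i : ℕ)) *
        σK (∑ i : Fin (p ^ (m - n)), algebraMap L K (x i) * ζ ^ (i : ℕ))) =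
      (p : ℚ) ^ (m - n) *
        ∑ i : Fin (p ^ (m - n)), Algebra.trace ℚ L (a * x i * σL (x i)) :=
  stmt2_general p s m n hp hmn hn M N hM hN K L ζ hζ ζN hζN hcomp σK hσK σL hσL a x
end
end

section
/- In the cyclotomic field K = ℚ(ζ_{2^n}) with n ≥ 2, for any z = Σ_{i=0}^{2^{n-1}-1} z_i ζ_{2^n}^i with z_i ∈ ℚ, we have Tr_{K/ℚ}(z·z̄) = 2^{n-1} · Σ_{i=0}^{2^{n-1}-1} z_i². -/
/-! With `d = 2 ^ (n - 1) = [K : ℚ]`, the powers `1, ζ, …, ζ ^ (d - 1)` form a power basis in which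
`ζ ^ d = -1`. Multiplication by `ζ ^ k` with `0 < k < d` sends each basis vector to `±` another
one, so its matrix has zero diagonal and `Tr (ζ ^ k) = 0`. As `z̄ = ∑ zᵢ ζ⁻¹ ^ i`, this makes the
basis orthogonal for `(x, y) ↦ Tr (x * ȳ)` with `Tr 1 = d`, which gives the formula. -/

noncomputable section

namespace PowerBasis

variable {R S : Type*} [CommRing R] [CommRing S] [Algebra R S] (pb : PowerBasis R S)

theorem repr_gen_pow_apply_of_ne {m : ℕ} (hm : m < pb.dim) {i : Fin pb.dim} (hmi : m ≠ i) :
    pb.basis.repr (pb.gen ^ m) i = 0 := by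
  rw [← pb.basis_eq_pow ⟨m, hm⟩, pb.basis.repr_self, Finsupp.single_apply,
    if_neg (by simpa [Fin.ext_iff] using hmi)]

theorem trace_gen_pow_eq_zero {c : R} (hc : pb.gen ^ pb.dim = algebraMap R S c) {k : ℕ}
    (hk0 : 0 < k) (hk : k < pb.dim) : Algebra.trace R S (pb.gen ^ k) = 0 := by
  classical
  rw [Algebra.trace_eq_matrix_trace pb.basis, Matrix.trace]
  refine Finset.sum_eq_zero fun i _ => ?_
  rw [Matrix.diag_apply, Algebra.leftMulMatrix_eq_repr_mul, pb.basis_eq_pow, ← pow_add]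
  by_cases hlt : k + i < pb.dim
  · exact pb.repr_gen_pow_apply_of_ne hlt (by omega)
  · have hwrap : pb.gen ^ (k + i) = c • pb.gen ^ (k + i - pb.dim) := by
      rw [Algebra.smul_def, ← hc, ← pow_add]; congr 1; omega
    rw [hwrap, map_smul, Finsupp.smul_apply,
      pb.repr_gen_pow_apply_of_ne (by omega) (by omega), smul_zero]

end PowerBasis

theorem Algebra.trace_sum_mul_sum_of_trace_mul_eq_ite {R S ι : Type*} [CommRing R] [CommRing S]
    [Algebra R S] [Fintype ι] [DecidableEq ι] {b b' : ι → S} {c : R}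
    (h : ∀ i j, Algebra.trace R S (b i * b' j) = if i = j then c else 0) (z : ι → R) :
    Algebra.trace R S ((∑ i, algebraMap R S (z i) * b i) * (∑ i, algebraMap R S (z i) * b' i)) =
      c * ∑ i, z i ^ 2 := by
  have hterm : ∀ i j, Algebra.trace R S ((algebraMap R S (z i) * b i) *
      (algebraMap R S (z j) * b' j)) = if i = j then c * z i ^ 2 else 0 := by
    intro i j
    rw [show (algebraMap R S (z i) * b i) * (algebraMap R S (z j) * b' j) =
        (z i * z j) • (b i * b' j) by rw [Algebra.smul_def, map_mul]; ring,
      map_smul, h, smul_eq_mul]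
    split_ifs with hij
    · subst hij; ring
    · ring
  rw [Finset.sum_mul_sum, map_sum]
  simp only [map_sum, hterm, Finset.sum_ite_eq, Finset.mem_univ, if_true, Finset.mul_sum]

theorem IsCyclotomicExtension.finrank_rat_two_pow (n : ℕ) (K : Type*) [Field K] [Algebra ℚ K]
    [IsCyclotomicExtension {2 ^ n} ℚ K] : Module.finrank ℚ K = 2 ^ (n - 1) := by
  rw [IsCyclotomicExtension.finrank (n := 2 ^ n) K
    (Polynomial.cyclotomic.irreducible_rat (by positivity))]
  cases n with
  | zero => simp
  | succ m => simp [Nat.totient_prime_pow_succ Nat.prime_two]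

namespace IsPrimitiveRoot

variable {n : ℕ} {K : Type*} [Field K] [Algebra ℚ K] [IsCyclotomicExtension {2 ^ n} ℚ K] {ζ : K}

theorem trace_pow_eq_zero_of_two_pow (hζ : IsPrimitiveRoot ζ (2 ^ n)) {k : ℕ} (hk0 : 0 < k)
    (hk : k < 2 ^ (n - 1)) : Algebra.trace ℚ K (ζ ^ k) = 0 := by
  cases n with
  | zero => simp only [zero_tsub, pow_zero] at hk; omega
  | succ m =>
    set pb := hζ.powerBasis ℚ
    have hdim : pb.dim = 2 ^ m := by
      rw [← pb.finrank, IsCyclotomicExtension.finrank_rat_two_pow (m + 1) K, Nat.add_sub_cancel]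
    have hneg : pb.gen ^ pb.dim = algebraMap ℚ K (-1) := by
      rw [hdim, powerBasis_gen, map_neg, map_one]
      exact (hζ.pow (by positivity) (pow_succ 2 m)).eq_neg_one_of_two_right
    simpa [pb] using pb.trace_gen_pow_eq_zero hneg hk0 (by simpa [hdim] using hk)

theorem trace_pow_mul_inv_pow (hζ : IsPrimitiveRoot ζ (2 ^ n)) {i j : ℕ} (hi : i < 2 ^ (n - 1))
    (hj : j < 2 ^ (n - 1)) :
    Algebra.trace ℚ K (ζ ^ i * ζ⁻¹ ^ j) = if i = j then 2 ^ (n - 1) else 0 := by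
  have hζ0 : ζ ≠ 0 := hζ.ne_zero (by positivity)
  rcases lt_trichotomy i j with hij | rfl | hij
  · rw [if_neg hij.ne, show ζ ^ i * ζ⁻¹ ^ j = ζ⁻¹ ^ (j - i) by
      rw [inv_pow, inv_pow, pow_sub₀ ζ hζ0 hij.le, mul_inv, inv_inv, mul_comm]]
    exact hζ.inv.trace_pow_eq_zero_of_two_pow (by omega) (by omega)
  · rw [if_pos rfl, inv_pow, mul_inv_cancel₀ (pow_ne_zero _ hζ0), ← map_one (algebraMap ℚ K),
      Algebra.trace_algebraMap, IsCyclotomicExtension.finrank_rat_two_pow n K]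
    simp
  · rw [if_neg hij.ne', inv_pow, ← pow_sub₀ ζ hζ0 hij.le]
    exact hζ.trace_pow_eq_zero_of_two_pow (by omega) (by omega)

end IsPrimitiveRoot

theorem stmt3_general (nn : ℕ) (K : Type) [Field K] [Algebra ℚ K]
    [IsCyclotomicExtension {(2 : ℕ) ^ nn} ℚ K]
    (ζ : K) (hζ : IsPrimitiveRoot ζ (2 ^ nn))
    (z : Fin (2 ^ (nn - 1)) → ℚ) :
    Algebra.trace ℚ K
        ((∑ i : Fin (2 ^ (nn - 1)), algebraMap ℚ K (z i) * ζ ^ (i : ℕ)) *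
         (∑ i : Fin (2 ^ (nn - 1)), algebraMap ℚ K (z i) * ζ⁻¹ ^ (i : ℕ))) =
      2 ^ (nn - 1) * ∑ i : Fin (2 ^ (nn - 1)), (z i) ^ 2 :=
  Algebra.trace_sum_mul_sum_of_trace_mul_eq_ite
    (fun i j => by simp only [hζ.trace_pow_mul_inv_pow i.2 j.2, Fin.val_inj]) z

/-- In `ℚ(ζ_{2^n})`, `Tr(z·z̄) = 2^{n-1}·∑ z_i²` for `z = ∑ z_i ζ^i` with rational `z_i`. -/
theorem stmt3 (nn : ℕ) (hn : 2 ≤ nn) (K : Type) [Field K] [Algebra ℚ K]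
    [IsCyclotomicExtension {(2 : ℕ) ^ nn} ℚ K]
    (ζ : K) (hζ : IsPrimitiveRoot ζ (2 ^ nn))
    (z : Fin (2 ^ (nn - 1)) → ℚ) :
    Algebra.trace ℚ K
        ((∑ i : Fin (2 ^ (nn - 1)), algebraMap ℚ K (z i) * ζ ^ (i : ℕ)) *
         (∑ i : Fin (2 ^ (nn - 1)), algebraMap ℚ K (z i) * ζ⁻¹ ^ (i : ℕ))) =
      2 ^ (nn - 1) * ∑ i : Fin (2 ^ (nn - 1)), (z i) ^ 2 :=
  stmt3_general nn K ζ hζ z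
end
end

section
/- For an odd prime p and n ≥ 1, in K = ℚ(ζ_{p^n}): Tr_{K/ℚ}( ((1−ζ_{p^n})(1−ζ_{p^n}^{-1}))^{-1} ) = p^{2(n-1)}·(p²−1)/12. -/
/-!
For `w ^ m = 1`, `w ≠ 1` one has `∑_{j<m} j wʲ = m / (w - 1)`, so with `F(w) = ∑_{j<m} j wʲ`,
`((1 - w)(1 - w⁻¹))⁻¹ = F(w) F(w⁻¹) / m²`. Summing over all `m`-th roots of unity, orthogonality
of characters gives `∑_w F(w) F(w⁻¹) = m ∑ j²`, of which `w = 1` contributes `(∑ j)²`; hence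
`12 ∑_{w ≠ 1} ((1 - w)(1 - w⁻¹))⁻¹ = m² - 1`. The primitive `pⁿ`-th roots are the `pⁿ`-th roots
that are not `pⁿ⁻¹`-th roots, and the conjugates of `ζ` are exactly the primitive `pⁿ`-th roots,
so the trace is `(p²ⁿ - p²ⁿ⁻²) / 12`.
-/

noncomputable section

open Finset Polynomial

theorem sub_one_sq_mul_sum_range_mul_pow {R : Type*} [CommRing R] (w : R) (n : ℕ) :
    (w - 1) ^ 2 * ∑ j ∈ range n, (j : R) * w ^ j = (n - 1) * w ^ (n + 1) - n * w ^ n + w := by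
  induction n with
  | zero => simp
  | succ n ih => rw [sum_range_succ, mul_add, ih]; push_cast; ring

theorem two_mul_sum_range_cast {R : Type*} [CommRing R] (n : ℕ) :
    2 * ∑ i ∈ range n, (i : R) = n * (n - 1) := by
  induction n with
  | zero => simp
  | succ n ih => rw [sum_range_succ, mul_add, ih]; push_cast; ring

theorem six_mul_sum_range_cast_sq {R : Type*} [CommRing R] (n : ℕ) :
    6 * ∑ i ∈ range n, (i : R) ^ 2 = n * (n - 1) * (2 * n - 1) := by
  induction n with
  | zero => simp
  | succ n ih => rw [sum_range_succ, mul_add, ih]; push_cast; ring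

theorem sum_range_mul_pow_of_pow_eq_one {K : Type*} [Field K] {w : K} {m : ℕ}
    (hw : w ^ m = 1) (hw1 : w ≠ 1) : ∑ j ∈ range m, (j : K) * w ^ j = m / (w - 1) := by
  have hw1' : w - 1 ≠ 0 := sub_ne_zero.2 hw1
  have key := sub_one_sq_mul_sum_range_mul_pow w m
  rw [pow_succ w m, hw] at key
  rw [eq_div_iff hw1']
  apply mul_left_cancel₀ hw1'
  linear_combination key

theorem sum_nthRootsFinset_prime_pow_succ {R M : Type*} [CommRing R] [IsDomain R]
    [AddCommMonoid M] {p : ℕ} (hp : p.Prime) (t : ℕ) (g : R → M) :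
    ∑ η ∈ nthRootsFinset (p ^ (t + 1)) (1 : R), g η =
      ∑ η ∈ nthRootsFinset (p ^ t) (1 : R), g η + ∑ η ∈ primitiveRoots (p ^ (t + 1)) R, g η := by
  classical
  have hsum (n : ℕ) : ∑ η ∈ nthRootsFinset (p ^ n) (1 : R), g η =
      ∑ i ∈ range (n + 1), ∑ η ∈ primitiveRoots (p ^ i) R, g η := by
    rw [IsPrimitiveRoot.nthRoots_one_eq_biUnion_primitiveRoots, sum_biUnion,
      Nat.divisors_prime_pow hp, sum_map]
    · rfl
    · exact fun a _ b _ hab ↦ IsPrimitiveRoot.disjoint hab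
  rw [hsum, hsum, sum_range_succ]

namespace IsPrimitiveRoot

theorem sum_nthRootsFinset_eq_sum_range {R M : Type*} [CommRing R] [IsDomain R]
    [AddCommMonoid M] {ξ : R} {m : ℕ} [NeZero m] (hξ : IsPrimitiveRoot ξ m) (g : R → M) :
    ∑ η ∈ nthRootsFinset m (1 : R), g η = ∑ k ∈ range m, g (ξ ^ k) := by
  symm
  refine sum_nbij (ξ ^ ·) (fun k _ ↦ ?_) (fun i hi j hj h ↦ ?_) (fun η hη ↦ ?_) (fun _ _ ↦ rfl)
  · rw [Polynomial.mem_nthRootsFinset (NeZero.pos m), ← pow_mul, mul_comm, pow_mul,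
      hξ.pow_eq_one, one_pow]
  · exact hξ.pow_inj (mem_range.1 hi) (mem_range.1 hj) h
  · obtain ⟨k, hk, rfl⟩ :=
      hξ.eq_pow_of_pow_eq_one ((Polynomial.mem_nthRootsFinset (NeZero.pos m) 1).1 (mem_coe.1 hη))
    exact ⟨k, mem_range.2 hk, rfl⟩

section Field

variable {K : Type*} [Field K] {ξ : K} {m : ℕ} [NeZero m]

theorem sum_nthRootsFinset_pow_mul_inv_pow (hξ : IsPrimitiveRoot ξ m) {i j : ℕ}
    (hi : i < m) (hj : j < m) :
    ∑ η ∈ nthRootsFinset m (1 : K), η ^ i * η⁻¹ ^ j = if i = j then (m : K) else 0 := by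
  set ρ := ξ ^ i * (ξ ^ j)⁻¹
  have hρ : ρ ^ m = 1 := by
    rw [mul_pow, inv_pow, ← pow_mul, ← pow_mul, mul_comm i, mul_comm j, pow_mul, pow_mul,
      hξ.pow_eq_one, one_pow, one_pow, inv_one, mul_one]
  have hρ1 : ρ = 1 ↔ i = j :=
    (mul_inv_eq_one₀ (pow_ne_zero j (hξ.ne_zero (NeZero.ne m)))).trans
      ⟨fun h ↦ hξ.pow_inj hi hj h, fun h ↦ h ▸ rfl⟩
  have hterm (k : ℕ) : (ξ ^ k) ^ i * (ξ ^ k)⁻¹ ^ j = ρ ^ k := by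
    rw [mul_pow, inv_pow, inv_pow, ← pow_mul, ← pow_mul, ← pow_mul, ← pow_mul, mul_comm i,
      mul_comm j]
  simp_rw [hξ.sum_nthRootsFinset_eq_sum_range, hterm]
  split_ifs with h
  · simp [hρ1.2 h]
  · rw [geom_sum_eq (mt hρ1.1 h), hρ, sub_self, zero_div]

theorem sum_nthRootsFinset_mul_inv (hξ : IsPrimitiveRoot ξ m) (c : ℕ → K) :
    ∑ η ∈ nthRootsFinset m (1 : K), (∑ i ∈ range m, c i * η ^ i) * ∑ j ∈ range m, c j * η⁻¹ ^ j =
      m * ∑ i ∈ range m, c i ^ 2 := by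
  have hinner (i : ℕ) (hi : i ∈ range m) :
      ∑ j ∈ range m, ∑ η ∈ nthRootsFinset m (1 : K), c i * η ^ i * (c j * η⁻¹ ^ j) =
        m * c i ^ 2 := by
    calc ∑ j ∈ range m, ∑ η ∈ nthRootsFinset m (1 : K), c i * η ^ i * (c j * η⁻¹ ^ j)
        = ∑ j ∈ range m, c i * c j * if i = j then (m : K) else 0 :=
          sum_congr rfl fun j hj ↦ by
            simp_rw [mul_mul_mul_comm (c i), ← mul_sum,
              hξ.sum_nthRootsFinset_pow_mul_inv_pow (mem_range.1 hi) (mem_range.1 hj)]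
      _ = m * c i ^ 2 := by simp [hi, sq, mul_comm]
  simp_rw [sum_mul_sum]
  rw [sum_comm]
  simp_rw [sum_comm (s := nthRootsFinset m (1 : K))]
  rw [mul_sum]
  exact sum_congr rfl hinner

theorem twelve_mul_sum_nthRootsFinset_inv_one_sub_mul_one_sub_inv (hξ : IsPrimitiveRoot ξ m) :
    12 * ∑ η ∈ nthRootsFinset m (1 : K), ((1 - η) * (1 - η⁻¹))⁻¹ = (m : K) ^ 2 - 1 := by
  classical
  have hm : (m : K) ≠ 0 := hξ.neZero'.out
  have hroot (η : K) (hη : η ∈ (nthRootsFinset m (1 : K)).erase 1) :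
      (∑ i ∈ range m, (i : K) * η ^ i) * ∑ j ∈ range m, (j : K) * η⁻¹ ^ j =
        m ^ 2 * ((1 - η) * (1 - η⁻¹))⁻¹ := by
    obtain ⟨hη1, hη⟩ := mem_erase.1 hη
    rw [Polynomial.mem_nthRootsFinset (NeZero.pos m)] at hη
    rw [sum_range_mul_pow_of_pow_eq_one hη hη1,
      sum_range_mul_pow_of_pow_eq_one (by rw [inv_pow, hη, inv_one]) (inv_ne_one.2 hη1),
      div_mul_div_comm, ← sq, div_eq_mul_inv]
    congr 2
    ring
  have hone := one_mem_nthRootsFinset (R := K) (NeZero.pos m)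
  have parseval := hξ.sum_nthRootsFinset_mul_inv (fun j ↦ (j : K))
  rw [← add_sum_erase _ _ hone, sum_congr rfl hroot, ← mul_sum] at parseval
  simp only [one_pow, inv_one, mul_one] at parseval
  -- `η = 1` contributes the junk value `0⁻¹ = 0`
  rw [← add_sum_erase _ _ hone, sub_self, zero_mul, inv_zero, zero_add]
  have h2 := two_mul_sum_range_cast (R := K) m
  have h6 := six_mul_sum_range_cast_sq (R := K) m
  refine mul_left_cancel₀ (pow_ne_zero 2 hm) ?_
  linear_combination 12 * parseval - 3 * (2 * ∑ j ∈ range m, (j : K) + m * (m - 1)) * h2 +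
    2 * m * h6

theorem twelve_mul_sum_primitiveRoots_inv_one_sub_mul_one_sub_inv {p t : ℕ} (hp : p.Prime)
    (hξ : IsPrimitiveRoot ξ (p ^ (t + 1))) :
    12 * ∑ η ∈ primitiveRoots (p ^ (t + 1)) K, ((1 - η) * (1 - η⁻¹))⁻¹ =
      (p : K) ^ (2 * t) * ((p : K) ^ 2 - 1) := by
  have : NeZero p := ⟨hp.ne_zero⟩
  have hξp : IsPrimitiveRoot (ξ ^ p) (p ^ t) := hξ.pow (NeZero.pos _) (pow_succ' p t)
  have h₁ := hξ.twelve_mul_sum_nthRootsFinset_inv_one_sub_mul_one_sub_inv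
  have h₀ := hξp.twelve_mul_sum_nthRootsFinset_inv_one_sub_mul_one_sub_inv
  rw [sum_nthRootsFinset_prime_pow_succ hp] at h₁
  push_cast at h₀ h₁
  linear_combination h₁ - h₀

end Field

theorem sum_algHom_apply_eq_sum_primitiveRoots {n : ℕ} [NeZero n]
    {K L C M : Type*} [Field K] [CommRing L] [IsDomain L] [Algebra K L]
    [IsCyclotomicExtension {n} K L] [CommRing C] [IsDomain C] [Algebra K C] [AddCommMonoid M]
    [Fintype (L →ₐ[K] C)] {ζ : L} (hζ : IsPrimitiveRoot ζ n)
    (hirr : Irreducible (cyclotomic n K)) (g : C → M) :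
    ∑ σ : L →ₐ[K] C, g (σ ζ) = ∑ η ∈ primitiveRoots n C, g η := by
  rw [← sum_coe_sort (primitiveRoots n C)]
  exact Fintype.sum_equiv (hζ.embeddingsEquivPrimitiveRoots C hirr) _ _ fun σ ↦ rfl

end IsPrimitiveRoot

theorem stmt11_general (p nn : ℕ) (hp : p.Prime) (hn : 1 ≤ nn)
    (M : ℕ+) (hM : (M : ℕ) = p ^ nn)
    (K : Type) [Field K] [Algebra ℚ K] [IsCyclotomicExtension {(M : ℕ)} ℚ K]
    (ζ : K) (hζ : IsPrimitiveRoot ζ (p ^ nn)) :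
    Algebra.trace ℚ K (((1 - ζ) * (1 - ζ⁻¹))⁻¹) =
      (p : ℚ) ^ (2 * (nn - 1)) * ((p : ℚ) ^ 2 - 1) / 12 := by
  obtain ⟨t, rfl⟩ : ∃ t, nn = t + 1 := ⟨nn - 1, by omega⟩
  have : NumberField K := IsCyclotomicExtension.numberField {(M : ℕ)} ℚ K
  have hζM : IsPrimitiveRoot ζ M := hM ▸ hζ
  have h₁₂ := IsPrimitiveRoot.twelve_mul_sum_primitiveRoots_inv_one_sub_mul_one_sub_inv hp
    (Complex.isPrimitiveRoot_exp (p ^ (t + 1)) (pow_ne_zero _ hp.ne_zero))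
  apply (algebraMap ℚ ℂ).injective
  rw [trace_eq_sum_embeddings (E := ℂ)]
  simp only [map_inv₀, map_mul, map_sub, map_one]
  rw [hζM.sum_algHom_apply_eq_sum_primitiveRoots (cyclotomic.irreducible_rat M.pos)
    (fun η ↦ ((1 - η) * (1 - η⁻¹))⁻¹), hM]
  simp only [Nat.add_sub_cancel, map_div₀, map_mul, map_sub, map_pow, map_natCast, map_ofNat,
    map_one]
  linear_combination h₁₂ / 12

/-- For an odd prime `p` and `n ≥ 1`, in `ℚ(ζ_{p^n})`:
`Tr(((1-ζ)(1-ζ⁻¹))⁻¹) = p^{2(n-1)}·(p²-1)/12`. -/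
theorem stmt11 (p nn : ℕ) (hp : p.Prime) (hodd : p ≠ 2) (hn : 1 ≤ nn)
    (M : ℕ+) (hM : (M : ℕ) = p ^ nn)
    (K : Type) [Field K] [Algebra ℚ K] [IsCyclotomicExtension {(M : ℕ)} ℚ K]
    (ζ : K) (hζ : IsPrimitiveRoot ζ (p ^ nn)) :
    Algebra.trace ℚ K (((1 - ζ) * (1 - ζ⁻¹))⁻¹) =
      (p : ℚ) ^ (2 * (nn - 1)) * ((p : ℚ) ^ 2 - 1) / 12 :=
  stmt11_general p nn hp hn M hM K ζ hζ
end
end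

section
/- Let p be an odd prime, Q(m_1,…,m_{p−1}) = (p−1)Σm_i² − 2Σ_{i<j}m_i m_j. For every permutation r of {1,…,p−1} and all integers m_1,…,m_{p−1}: Q(r(p−1)/p − m_1, r(p−2)/p − m_2, …, r(1)/p − m_{p−1}) ≥ Q(r(p−1)/p, …, r(1)/p). -/
noncomputable section

section Aux

/-- Expansion of the square of a sum over `Fin n`. -/
lemma sq_sum_expand {n : ℕ} (v : Fin n → ℝ) :
    (∑ i, v i) ^ 2 = ∑ i, (v i) ^ 2 + 2 * ∑ i, ∑ j ∈ Finset.Ioi i, v i * v j := by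
  have key : ∀ i : Fin n, ∑ j : Fin n, v i * v j
      = (v i) ^ 2 + (∑ j ∈ Finset.Iio i, v i * v j + ∑ j ∈ Finset.Ioi i, v i * v j) := by
    intro i
    have h1 : ∑ j ∈ Finset.Iio i, v i * v j = ∑ j : Fin n, if j < i then v i * v j else 0 := by
      rw [← Finset.filter_gt_eq_Iio, Finset.sum_filter]
    have h2 : ∑ j ∈ Finset.Ioi i, v i * v j = ∑ j : Fin n, if i < j then v i * v j else 0 := by
      rw [← Finset.filter_lt_eq_Ioi, Finset.sum_filter]
    have h3 : (v i) ^ 2 = ∑ j : Fin n, if j = i then v i * v j else 0 := by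
      rw [Finset.sum_ite_eq' Finset.univ i (fun j => v i * v j)]
      simp [sq]
    rw [h1, h2, h3, ← Finset.sum_add_distrib, ← Finset.sum_add_distrib]
    refine Finset.sum_congr rfl fun j _ => ?_
    rcases lt_trichotomy j i with h | h | h
    · simp [h, ne_of_lt h, not_lt_of_gt h]
    · simp [h]
    · simp [h, (ne_of_lt h).symm, not_lt_of_gt h]
  have hswap : ∑ i, ∑ j ∈ Finset.Iio i, v i * v j = ∑ i, ∑ j ∈ Finset.Ioi i, v i * v j := by
    have h1 : ∀ i : Fin n, ∑ j ∈ Finset.Iio i, v i * v j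
        = ∑ j : Fin n, if j < i then v i * v j else 0 := by
      intro i; rw [← Finset.filter_gt_eq_Iio, Finset.sum_filter]
    have h2 : ∀ i : Fin n, ∑ j ∈ Finset.Ioi i, v i * v j
        = ∑ j : Fin n, if i < j then v i * v j else 0 := by
      intro i; rw [← Finset.filter_lt_eq_Ioi, Finset.sum_filter]
    simp only [h1, h2]
    rw [Finset.sum_comm]
    refine Finset.sum_congr rfl fun i _ => Finset.sum_congr rfl fun j _ => ?_
    by_cases h : i < j <;> simp [h, mul_comm]
  have hs : (∑ i, v i) ^ 2 = ∑ i : Fin n, ∑ j : Fin n, v i * v j := by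
    rw [sq, Finset.sum_mul_sum]
  rw [hs]
  simp only [key]
  rw [Finset.sum_add_distrib, Finset.sum_add_distrib, hswap]
  ring

/-- For a strictly monotone integer tuple, gaps are at least the index gaps. -/
lemma strictMono_gap {n : ℕ} {g : Fin n → ℤ} (hg : StrictMono g) :
    ∀ i j : Fin n, i ≤ j → ((j : ℕ) : ℤ) - ((i : ℕ) : ℤ) ≤ g j - g i := by
  have key : ∀ k : ℕ, ∀ i j : Fin n, (j : ℕ) = (i : ℕ) + k → g i + (k : ℤ) ≤ g j := by
    intro k
    induction k with
    | zero =>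
      intro i j h
      have : i = j := Fin.ext (by omega)
      simp [this]
    | succ k ih =>
      intro i j h
      have hj' : (i : ℕ) + k < n := by
        have := j.isLt; omega
      have h1 := ih i ⟨(i : ℕ) + k, hj'⟩ rfl
      have h2 : g ⟨(i : ℕ) + k, hj'⟩ < g j := by
        apply hg
        rw [Fin.lt_def]; simp; omega
      have h3 := Int.add_one_le_iff.mpr h2
      push_cast
      linarith
  intro i j hij
  have hle : (i : ℕ) ≤ (j : ℕ) := hij
  have := key ((j : ℕ) - (i : ℕ)) i j (by omega)
  have hc : (((j : ℕ) - (i : ℕ) : ℕ) : ℤ) = ((j : ℕ) : ℤ) - ((i : ℕ) : ℤ) := by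
    push_cast [Nat.cast_sub hle]; ring
  linarith [hc ▸ this]

/-- Key combinatorial inequality: for an injective integer tuple, the double sum of squared
differences is at least that of the identity tuple. -/
lemma key_ineq {n : ℕ} (c : Fin n → ℤ) (hc : Function.Injective c) :
    ∑ i : Fin n, ∑ j : Fin n, (((i : ℕ) : ℤ) - ((j : ℕ) : ℤ)) ^ 2
      ≤ ∑ i : Fin n, ∑ j : Fin n, (c i - c j) ^ 2 := by
  set σ := Tuple.sort c with hσ
  have hmono : Monotone (c ∘ σ) := Tuple.monotone_sort c
  have hsm : StrictMono (c ∘ σ) := hmono.strictMono_of_injective (hc.comp σ.injective)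
  have inner : ∀ a : ℤ, ∑ j, (a - c (σ j)) ^ 2 = ∑ j, (a - c j) ^ 2 :=
    fun a => Equiv.sum_comp σ (fun j => (a - c j) ^ 2)
  have h1 : ∑ i : Fin n, ∑ j : Fin n, (c (σ i) - c (σ j)) ^ 2
      = ∑ i : Fin n, ∑ j : Fin n, (c i - c j) ^ 2 := by
    calc ∑ i : Fin n, ∑ j, (c (σ i) - c (σ j)) ^ 2
        = ∑ i : Fin n, ∑ j, (c (σ i) - c j) ^ 2 :=
          Finset.sum_congr rfl (fun i _ => inner _)
      _ = ∑ i : Fin n, ∑ j, (c i - c j) ^ 2 :=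
          Equiv.sum_comp σ (fun i => ∑ j, (c i - c j) ^ 2)
  rw [← h1]
  refine Finset.sum_le_sum fun i _ => Finset.sum_le_sum fun j _ => ?_
  rcases le_total i j with hij | hij
  · have hgap := strictMono_gap hsm i j hij
    have h0 : (0 : ℤ) ≤ ((j : ℕ) : ℤ) - ((i : ℕ) : ℤ) := by
      have : (i : ℕ) ≤ (j : ℕ) := hij
      omega
    have := pow_le_pow_left₀ h0 hgap 2
    calc (((i : ℕ) : ℤ) - ((j : ℕ) : ℤ)) ^ 2
        = (((j : ℕ) : ℤ) - ((i : ℕ) : ℤ)) ^ 2 := by ring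
      _ ≤ (c (σ j) - c (σ i)) ^ 2 := this
      _ = (c (σ i) - c (σ j)) ^ 2 := by ring
  · have hgap := strictMono_gap hsm j i hij
    have h0 : (0 : ℤ) ≤ ((i : ℕ) : ℤ) - ((j : ℕ) : ℤ) := by
      have : (j : ℕ) ≤ (i : ℕ) := hij
      omega
    exact pow_le_pow_left₀ h0 hgap 2

/-- Expansion of the double sum of squared differences, over ℤ. -/
lemma double_expand {n : ℕ} (d : Fin n → ℤ) :
    ∑ i : Fin n, ∑ j : Fin n, (d i - d j) ^ 2
      = 2 * n * (∑ i, (d i) ^ 2) - 2 * (∑ i, d i) ^ 2 := by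
  have key : ∀ i : Fin n, ∑ j : Fin n, (d i - d j) ^ 2
      = (n : ℤ) * (d i) ^ 2 - 2 * d i * (∑ j, d j) + ∑ j, (d j) ^ 2 := by
    intro i
    have : ∀ j : Fin n, (d i - d j) ^ 2 = (d i) ^ 2 - 2 * d i * d j + (d j) ^ 2 := by
      intro j; ring
    simp only [this]
    rw [Finset.sum_add_distrib, Finset.sum_sub_distrib, Finset.sum_const, ← Finset.mul_sum]
    simp [mul_comm]
  simp only [key]
  rw [Finset.sum_add_distrib, Finset.sum_sub_distrib, ← Finset.mul_sum, Finset.sum_const,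
    ← Finset.sum_mul]
  simp
  rw [← Finset.mul_sum]
  ring
end Aux

/-- Wrapper: injective tuples minimize `n∑d² - (∑d)²` no worse than the identity tuple. -/
lemma key_ineq' {n : ℕ} (c : Fin n → ℤ) (hc : Function.Injective c) :
    (n : ℤ) * (∑ i : Fin n, (((i : ℕ) : ℤ)) ^ 2) - (∑ i : Fin n, ((i : ℕ) : ℤ)) ^ 2
      ≤ (n : ℤ) * (∑ i, (c i) ^ 2) - (∑ i, c i) ^ 2 := by
  have h := key_ineq c hc
  rw [double_expand c] at h
  have h2 := double_expand (fun i : Fin n => ((i : ℕ) : ℤ))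
  rw [h2] at h
  linarith


/-- Lenstra's inequality: for any permutation `r` of `{1, …, p-1}` and integers `m_i`,
the point `(r(p-1)/p, …, r(1)/p)` is a `Q`-closest representative of its coset mod `ℤ^{p-1}`,
where `Q(v) = (p-1)·∑ v_i² - 2·∑_{i<j} v_i·v_j`. -/
theorem stmt14 (p : ℕ) (hp : p.Prime) (hodd : p ≠ 2)
    (r : Equiv.Perm (Fin (p - 1))) (m : Fin (p - 1) → ℤ) :
    (fun v : Fin (p - 1) → ℝ =>
        ((p : ℝ) - 1) * ∑ i, (v i) ^ 2 - 2 * ∑ i, ∑ j ∈ Finset.Ioi i, v i * v j)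
      (fun i => ((r i : ℕ) + 1 : ℝ) / p) ≤
    (fun v : Fin (p - 1) → ℝ =>
        ((p : ℝ) - 1) * ∑ i, (v i) ^ 2 - 2 * ∑ i, ∑ j ∈ Finset.Ioi i, v i * v j)
      (fun i => ((r i : ℕ) + 1 : ℝ) / p - (m i : ℝ)) := by
  have hp2 : 2 ≤ p := hp.two_le
  have hp0 : (0 : ℝ) < p := by exact_mod_cast (by omega : 0 < p)
  beta_reduce
  have hid : ∀ v : Fin (p - 1) → ℝ,
      ((p : ℝ) - 1) * ∑ i, (v i) ^ 2 - 2 * ∑ i, ∑ j ∈ Finset.Ioi i, v i * v j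
        = (p : ℝ) * (∑ i, (v i) ^ 2) - (∑ i, v i) ^ 2 := by
    intro v
    have h := sq_sum_expand v
    linarith
  rw [hid, hid]
  set a : Fin (p - 1) → ℤ := fun i => ((r i : ℕ) : ℤ) + 1 with ha
  set b : Fin (p - 1) → ℤ := fun i => ((r i : ℕ) : ℤ) + 1 - (p : ℤ) * m i with hb
  have hXb : ∀ i, (((r i : ℕ) : ℝ) + 1) / p - (m i : ℝ) = (b i : ℝ) / p := by
    intro i; rw [hb]; push_cast; field_simp
  have hXa : ∀ i, (((r i : ℕ) : ℝ) + 1) / p = (a i : ℝ) / p := by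
    intro i; rw [ha]; push_cast; ring
  simp only [hXb]
  simp only [hXa]
  -- bounds on r values
  have hrlt : ∀ i : Fin (p - 1), (r i : ℕ) < p - 1 := fun i => (r i).isLt
  -- b i is never 0, and b is injective
  have h1 : ∀ i, b i ≠ 0 := by
    intro i h0
    simp only [hb] at h0
    have hdvd : (p : ℤ) ∣ ((r i : ℕ) : ℤ) + 1 := ⟨m i, by linarith⟩
    have hlt : |((r i : ℕ) : ℤ) + 1| < (p : ℤ) := by
      have := hrlt i
      rw [abs_of_nonneg (by positivity)]
      omega
    have := Int.eq_zero_of_abs_lt_dvd hdvd hlt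
    omega
  have h2 : ∀ i j, b i = b j → i = j := by
    intro i j hbij
    simp only [hb] at hbij
    have hdvd : (p : ℤ) ∣ ((r i : ℕ) : ℤ) - ((r j : ℕ) : ℤ) := ⟨m i - m j, by ring_nf; linarith⟩
    have hz := Int.eq_zero_of_abs_lt_dvd hdvd (by
      have hi := hrlt i; have hj := hrlt j
      rw [abs_sub_lt_iff]
      omega)
    have : r i = r j := Fin.ext (by omega)
    exact r.injective this
  -- extend b by a zero coordinate
  set c : Fin (p - 1 + 1) → ℤ := Fin.cons 0 b with hc
  have hinj : Function.Injective c := by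
    intro i j h
    induction i using Fin.cases with
    | zero =>
      induction j using Fin.cases with
      | zero => rfl
      | succ j =>
        exfalso; apply h1 j
        rw [hc] at h; simpa using h.symm
    | succ i =>
      induction j using Fin.cases with
      | zero =>
        exfalso; apply h1 i
        rw [hc] at h; simpa using h
      | succ j =>
        exact congrArg Fin.succ (h2 i j (by rw [hc] at h; simpa using h))
  have hkey := key_ineq' c hinj
  -- identify the sums
  have S1 : ∑ i : Fin (p - 1 + 1), c i = ∑ i, b i := by
    rw [Fin.sum_univ_succ]; simp [hc]
  have S2 : ∑ i : Fin (p - 1 + 1), (c i) ^ 2 = ∑ i, (b i) ^ 2 := by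
    rw [Fin.sum_univ_succ]; simp [hc]
  have T1 : ∑ i : Fin (p - 1 + 1), ((i : ℕ) : ℤ) = ∑ i, a i := by
    have e1 : ∑ i, a i = ∑ i : Fin (p - 1), (((i : ℕ) : ℤ) + 1) :=
      Equiv.sum_comp r (fun i : Fin (p - 1) => ((i : ℕ) : ℤ) + 1)
    rw [e1, Fin.sum_univ_succ]
    simp only [Fin.val_zero, Nat.cast_zero, zero_add]
    refine Finset.sum_congr rfl fun i _ => ?_
    rw [Fin.val_succ]; push_cast; ring
  have T2 : ∑ i : Fin (p - 1 + 1), (((i : ℕ) : ℤ)) ^ 2 = ∑ i, (a i) ^ 2 := by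
    have e1 : ∑ i, (a i) ^ 2 = ∑ i : Fin (p - 1), (((i : ℕ) : ℤ) + 1) ^ 2 :=
      Equiv.sum_comp r (fun i : Fin (p - 1) => (((i : ℕ) : ℤ) + 1) ^ 2)
    rw [e1, Fin.sum_univ_succ]
    simp only [Fin.val_zero, Nat.cast_zero]
    rw [show ((0 : ℤ)) ^ 2 = 0 by ring, zero_add]
    refine Finset.sum_congr rfl fun i _ => ?_
    rw [Fin.val_succ]; push_cast; ring
  have hcast : ((p - 1 + 1 : ℕ) : ℤ) = (p : ℤ) := by
    have h : p - 1 + 1 = p := by omega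
    rw [h]
  rw [S1, S2, T1, T2, hcast] at hkey
  -- convert the real goal to the integer inequality
  have conv : ∀ d : Fin (p - 1) → ℤ,
      (p : ℝ) * (∑ i, ((d i : ℝ) / p) ^ 2) - (∑ i, (d i : ℝ) / p) ^ 2
        = (((p : ℤ) * (∑ i, (d i) ^ 2) - (∑ i, d i) ^ 2 : ℤ) : ℝ) / (p : ℝ) ^ 2 := by
    intro d
    have e1 : ∑ i, ((d i : ℝ) / p) ^ 2 = (∑ i, (d i : ℝ) ^ 2) / (p : ℝ) ^ 2 := by
      rw [Finset.sum_div]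
      exact Finset.sum_congr rfl fun i _ => by rw [div_pow]
    have e2 : ∑ i, (d i : ℝ) / p = (∑ i, (d i : ℝ)) / p := by
      rw [Finset.sum_div]
    rw [e1, e2]
    push_cast
    field_simp
  rw [conv a, conv b]
  gcongr
end
end

section
/- Let K be a Galois number field of degree n, γ_K its Hermite–Humbert constant, and η_K = min{|Nm_{K/ℚ}(x)| : x ∈ O_K, |Nm_{K/ℚ}(x)| ≥ 2}. If γ_K < n·η_K^{2/n}, then for every totally positive a ∈ K, every nonzero x ∈ O_K minimizing Tr_{K/ℚ}(a·x·x̄) is a unit. -/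
/-!
By AM–GM over the `n` complex embeddings, `Tr(a x x̄) ≥ n · (Nm(a) · Nm(x)²)^{1/n}`. If `x`
minimizes the trace form then `Tr(a x x̄) = μ(a) ≤ γ_K · Nm(a)^{1/n} < n · η_K^{2/n} · Nm(a)^{1/n}`,
hence `|Nm(x)| < η_K`; as `x` is a nonzero algebraic integer, this leaves only `|Nm(x)| = 1`.
Finiteness of `γ_K` (Hermite) comes from Minkowski's convex body theorem.
-/

noncomputable section

/-- The Hermite–Humbert constant `γ_K = sup_a μ(a)/Nm(a)^{1/n}`. -/
def gammaK (K : Type*) [Field K] [NumberField K] : ℝ :=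
  sSup { t | ∃ a : K, totPos K a ∧
    t = muK K a / ((Algebra.norm ℚ a : ℝ) ^ ((1 : ℝ) / (Module.finrank ℚ K))) }

/-- `η_K`: the smallest absolute norm `≥ 2` of an algebraic integer of `K`. -/
def etaK (K : Type*) [Field K] [NumberField K] : ℝ :=
  sInf { t | ∃ x : NumberField.RingOfIntegers K,
    2 ≤ |(Algebra.norm ℚ (x : K))| ∧ t = |(Algebra.norm ℚ (x : K) : ℝ)| }

open NumberField Module

section

variable {K : Type*} [Field K] [NumberField K]

lemma norm_eq_prod_ringHom (x : K) :
    ((Algebra.norm ℚ x : ℚ) : ℂ) = ∏ φ : K →+* ℂ, φ x := by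
  rw [← eq_ratCast (algebraMap ℚ ℂ), Algebra.norm_eq_prod_embeddings ℚ ℂ]
  exact Fintype.prod_equiv (RingHom.equivRatAlgHom K ℂ).symm _ _ fun _ => rfl

lemma prod_normSq_eq_norm_sq (x : K) :
    ∏ φ : K →+* ℂ, Complex.normSq (φ x) = ((Algebra.norm ℚ x : ℚ) : ℝ) ^ 2 := by
  rw [← map_prod, ← norm_eq_prod_ringHom, ← Complex.ofReal_ratCast, Complex.normSq_ofReal, sq]

namespace totPos

variable {a : K}

lemma ringHom_eq_ofReal_re (ha : totPos K a) (φ : K →+* ℂ) : φ a = ((φ a).re : ℂ) :=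
  Complex.ext rfl (by simp [(ha φ).2])

lemma infinitePlace_mk_apply (ha : totPos K a) (φ : K →+* ℂ) :
    InfinitePlace.mk φ a = (φ a).re := by
  rw [InfinitePlace.apply, ha.ringHom_eq_ofReal_re, Complex.norm_real, Complex.ofReal_re,
    Real.norm_of_nonneg (ha φ).1.le]

lemma norm_eq_prod_re (ha : totPos K a) :
    ((Algebra.norm ℚ a : ℚ) : ℝ) = ∏ φ : K →+* ℂ, (φ a).re := by
  have h := norm_eq_prod_ringHom a
  rw [Finset.prod_congr rfl fun φ _ => ha.ringHom_eq_ofReal_re φ, ← Complex.ofReal_prod,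
    ← Complex.ofReal_ratCast] at h
  exact_mod_cast h

lemma norm_pos (ha : totPos K a) : 0 < ((Algebra.norm ℚ a : ℚ) : ℝ) := by
  rw [ha.norm_eq_prod_re]
  exact Finset.prod_pos fun φ _ => (ha φ).1

end totPos

lemma qform_nonneg {a : K} (ha : totPos K a) (x : K) : 0 ≤ qform K a x :=
  Finset.sum_nonneg fun φ _ => mul_nonneg (ha φ).1.le (Complex.normSq_nonneg _)

lemma muK_le_qform {a : K} (ha : totPos K a) {x : 𝓞 K} (hx : x ≠ 0) :
    muK K a ≤ qform K a (x : K) :=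
  csInf_le ⟨0, by rintro t ⟨y, -, rfl⟩; exact qform_nonneg ha _⟩ ⟨x, hx, rfl⟩

lemma mul_rpow_norm_le_qform {a : K} (ha : totPos K a) (x : K) :
    (finrank ℚ K : ℝ) * ((Algebra.norm ℚ a : ℚ) : ℝ) ^ ((1 : ℝ) / finrank ℚ K) *
      |((Algebra.norm ℚ x : ℚ) : ℝ)| ^ ((2 : ℝ) / finrank ℚ K) ≤ qform K a x := by
  set n := finrank ℚ K
  have hn : (0 : ℝ) < n := Nat.cast_pos.mpr finrank_pos
  have amgm := Real.geom_mean_le_arith_mean Finset.univ (fun _ => 1)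
    (fun φ : K →+* ℂ => (φ a).re * Complex.normSq (φ x)) (fun _ _ => zero_le_one)
    (by simp [Embeddings.card K ℂ, finrank_pos])
    fun φ _ => mul_nonneg (ha φ).1.le (Complex.normSq_nonneg _)
  simp only [Real.rpow_one, one_mul, Finset.sum_const, Finset.card_univ, Embeddings.card K ℂ,
    nsmul_eq_mul, mul_one, Finset.prod_mul_distrib, ← ha.norm_eq_prod_re,
    prod_normSq_eq_norm_sq] at amgm
  have hsq : (((Algebra.norm ℚ x : ℚ) : ℝ) ^ 2) ^ ((1 : ℝ) / n) =
      |((Algebra.norm ℚ x : ℚ) : ℝ)| ^ ((2 : ℝ) / n) := by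
    rw [← sq_abs, ← Real.rpow_natCast, ← Real.rpow_mul (abs_nonneg _)]
    ring_nf
  rw [mul_assoc, ← hsq, ← Real.mul_rpow ha.norm_pos.le (sq_nonneg _), one_div,
    ← le_div_iff₀' hn]
  exact amgm

lemma etaK_le {x : 𝓞 K} (hx : 2 ≤ |Algebra.norm ℚ (x : K)|) :
    etaK K ≤ |((Algebra.norm ℚ (x : K) : ℚ) : ℝ)| :=
  csInf_le ⟨0, by rintro t ⟨y, -, rfl⟩; positivity⟩ ⟨x, hx, rfl⟩

lemma etaK_nonneg : 0 ≤ etaK K :=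
  Real.sInf_nonneg (by rintro t ⟨y, -, rfl⟩; positivity)

lemma isUnit_of_abs_norm_lt_two {x : 𝓞 K} (hx : x ≠ 0) (h : |Algebra.norm ℚ (x : K)| < 2) :
    IsUnit x := by
  rw [isUnit_iff_norm, RingOfIntegers.coe_norm]
  rw [← Algebra.coe_norm_int] at h ⊢
  have h0 : Algebra.norm ℤ x ≠ 0 := Algebra.norm_ne_zero_iff.mpr hx
  rw [← Int.cast_abs] at h ⊢
  norm_cast at h ⊢
  obtain ⟨h₁, h₂⟩ := abs_lt.mp h
  rw [abs_eq zero_le_one]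
  omega

open InfinitePlace mixedEmbedding

lemma exists_ne_zero_lt_of_minkowskiBound_lt_prod (f : InfinitePlace K → NNReal)
    (hf : (minkowskiBound K ↑1).toNNReal < ∏ w, f w ^ mult w) :
    ∃ y : 𝓞 K, y ≠ 0 ∧ ∀ w : InfinitePlace K, w y < f w := by
  classical
  refine exists_ne_zero_mem_ringOfIntegers_lt K ?_
  rw [convexBodyLT_volume, ← ENNReal.coe_toNNReal (minkowskiBound_lt_top K ↑1).ne]
  calc (((minkowskiBound K ↑1).toNNReal : NNReal) : ENNReal) < ∏ w, f w ^ mult w := by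
        exact_mod_cast hf
    _ ≤ _ := le_mul_of_one_le_left zero_le (by exact_mod_cast one_le_convexBodyLTFactor K)

lemma prod_sqrt_div_pow_mult (a : K) {t : ℝ} (ht : 0 ≤ t) :
    ∏ w : InfinitePlace K, √(t / w a) ^ mult w =
      √(t ^ finrank ℚ K / |((Algebra.norm ℚ a : ℚ) : ℝ)|) := by
  have hwa : ∀ w : InfinitePlace K, 0 ≤ t / w a := fun w => div_nonneg ht (apply_nonneg w a)
  rw [← Real.sqrt_sq (Finset.prod_nonneg fun w _ => pow_nonneg (Real.sqrt_nonneg _) _),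
    ← Finset.prod_pow]
  simp_rw [← pow_right_comm, Real.sq_sqrt (hwa _), div_pow]
  rw [Finset.prod_div_distrib, Finset.prod_pow_eq_pow_sum, sum_mult_eq, prod_eq_abs_norm,
    Rat.cast_abs]

lemma qform_le_of_forall_lt_sqrt {a : K} (ha : totPos K a) {t : ℝ} {y : K}
    (hy : ∀ w : InfinitePlace K, w y < √(t / w a)) : qform K a y ≤ finrank ℚ K * t := by
  rw [qform, ← Embeddings.card K ℂ, ← Finset.card_univ, ← nsmul_eq_mul, ← Finset.sum_const]
  refine Finset.sum_le_sum fun φ _ => ?_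
  have hwa := (ha φ).1
  rw [← ha.infinitePlace_mk_apply] at hwa ⊢
  have hwy := hy (InfinitePlace.mk φ)
  rw [Real.lt_sqrt (apply_nonneg _ _), lt_div_iff₀ hwa, InfinitePlace.apply] at hwy
  rw [← Complex.sq_norm]
  linarith

lemma exists_muK_le_mul_rpow_norm : ∃ C : ℝ, ∀ a : K, totPos K a →
    muK K a ≤ C * ((Algebra.norm ℚ a : ℚ) : ℝ) ^ ((1 : ℝ) / finrank ℚ K) := by
  set n := finrank ℚ K
  have hn : n ≠ 0 := finrank_pos.ne'
  set B : NNReal := (minkowskiBound K ↑1).toNNReal + 1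
  refine ⟨n * ((B : ℝ) ^ 2) ^ ((1 : ℝ) / n), fun a ha => ?_⟩
  set N := ((Algebra.norm ℚ a : ℚ) : ℝ)
  have hN : 0 < N := ha.norm_pos
  -- On the box `w y < √(t / w a)` every term of the trace form is below `t`, and the choice
  -- `t ^ n = B² N` makes the box exceed the Minkowski bound.
  set t := ((B : ℝ) ^ 2 * N) ^ ((1 : ℝ) / n) with ht_def
  have ht : 0 ≤ t := by positivity
  have htn : t ^ n = (B : ℝ) ^ 2 * N := by
    rw [ht_def, one_div, Real.rpow_inv_natCast_pow (by positivity) hn]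
  have hprod : ∏ w : InfinitePlace K, √(t / w a) ^ mult w = B := by
    rw [prod_sqrt_div_pow_mult a ht, abs_of_pos hN, htn, mul_div_cancel_right₀ _ hN.ne',
      Real.sqrt_sq B.coe_nonneg]
  obtain ⟨y, hy0, hy⟩ := exists_ne_zero_lt_of_minkowskiBound_lt_prod
    (fun w => (√(t / w a)).toNNReal) (by
      rw [← NNReal.coe_lt_coe, NNReal.coe_prod]
      simp only [NNReal.coe_pow, Real.coe_toNNReal _ (Real.sqrt_nonneg _), hprod]
      exact_mod_cast lt_add_one _)
  calc muK K a ≤ qform K a (y : K) := muK_le_qform ha hy0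
    _ ≤ n * t := qform_le_of_forall_lt_sqrt ha fun w => by
        simpa only [Real.coe_toNNReal _ (Real.sqrt_nonneg _)] using hy w
    _ = _ := by rw [ht_def, Real.mul_rpow (by positivity) hN.le, mul_assoc]

lemma muK_div_rpow_norm_le_gammaK {a : K} (ha : totPos K a) :
    muK K a / ((Algebra.norm ℚ a : ℚ) : ℝ) ^ ((1 : ℝ) / finrank ℚ K) ≤ gammaK K := by
  obtain ⟨C, hC⟩ := exists_muK_le_mul_rpow_norm (K := K)
  refine le_csSup ⟨C, ?_⟩ ⟨a, ha, rfl⟩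
  rintro t ⟨b, hb, rfl⟩
  rw [div_le_iff₀ (by positivity [hb.norm_pos])]
  exact hC b hb

end

theorem stmt16_general (K : Type) [Field K] [NumberField K]
    (h : gammaK K <
      (Module.finrank ℚ K : ℝ) * etaK K ^ ((2 : ℝ) / (Module.finrank ℚ K))) :
    ∀ a : K, totPos K a → ∀ x : NumberField.RingOfIntegers K, x ≠ 0 →
      qform K a (x : K) = muK K a → IsUnit x := by
  intro a ha x hx hmin
  set n := finrank ℚ K
  set Na := ((Algebra.norm ℚ a : ℚ) : ℝ) ^ ((1 : ℝ) / n)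
  have hNa : 0 < Na := by positivity [ha.norm_pos]
  have hn : (0 : ℝ) < n := Nat.cast_pos.mpr finrank_pos
  have hγ : muK K a ≤ gammaK K * Na := (div_le_iff₀ hNa).mp (muK_div_rpow_norm_le_gammaK ha)
  have hxη : |((Algebra.norm ℚ (x : K) : ℚ) : ℝ)| ^ ((2 : ℝ) / n) < etaK K ^ ((2 : ℝ) / n) := by
    refine lt_of_mul_lt_mul_left ?_ (mul_pos hn hNa).le
    calc n * Na * |((Algebra.norm ℚ (x : K) : ℚ) : ℝ)| ^ ((2 : ℝ) / n)
        ≤ muK K a := hmin ▸ mul_rpow_norm_le_qform ha x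
      _ ≤ gammaK K * Na := hγ
      _ < n * etaK K ^ ((2 : ℝ) / n) * Na := mul_lt_mul_of_pos_right h hNa
      _ = n * Na * etaK K ^ ((2 : ℝ) / n) := by ring
  rw [Real.rpow_lt_rpow_iff (abs_nonneg _) etaK_nonneg (by positivity)] at hxη
  refine isUnit_of_abs_norm_lt_two hx (not_le.mp fun h2 => ?_)
  exact (etaK_le h2).not_gt hxη

/-- If `γ_K < n·η_K^{2/n}` then every minimizer of the trace form of a totally positive
element is a unit (so `K` is strongly unit reducible). -/
theorem stmt16 (K : Type) [Field K] [NumberField K] [IsGalois ℚ K]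
    (h : gammaK K <
      (Module.finrank ℚ K : ℝ) * etaK K ^ ((2 : ℝ) / (Module.finrank ℚ K))) :
    ∀ a : K, totPos K a → ∀ x : NumberField.RingOfIntegers K, x ≠ 0 →
      qform K a (x : K) = muK K a → IsUnit x :=
  stmt16_general K h
end
end
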